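/- arXiv:1910.05174 — 5 statements merged into one kernel-verified Lean document; each statement's English description precedes it below -/
import Mathlib

section
/- Let Γ be an additively written abelian group, R a Γ-graded ring, γ_1,…,γ_n ∈ Γ, and δ ∈ Γ such that there exists an invertible element u_δ ∈ R_δ. Let u ∈ M_n(R) be the diagonal matrix with diagonal entries u_δ, 1, 1, …, 1. Then the map x ↦ u⁻¹ x u is a graded ring isomorphism from M_n(R)(γ_1,γ_2,…,γ_n) onto M_n(R)(γ_1+δ,γ_2,…,γ_n). -/
/-- In a graded ring, the two-sided inverse of a homogeneous element of degree `δ`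
is homogeneous of degree `-δ`. -/
lemma inv_homog {Γ R : Type*} [AddCommGroup Γ] [DecidableEq Γ] [Ring R]
    (ℛ : Γ → AddSubgroup R) [GradedRing ℛ] {δ : Γ} {u₀ v₀ : R}
    (hu₀ : u₀ ∈ ℛ δ) (huv : u₀ * v₀ = 1) (hvu : v₀ * u₀ = 1) : v₀ ∈ ℛ (-δ) := by
  set c : R := (DirectSum.decompose ℛ v₀ (-δ) : R) with hc
  have h1 : u₀ * c = 1 := by
    have h := DirectSum.coe_decompose_mul_add_of_left_mem (𝒜 := ℛ) (j := -δ) (b := v₀) hu₀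
    rw [huv, add_neg_cancel] at h
    rw [← h, DirectSum.decompose_of_mem_same ℛ (SetLike.one_mem_graded ℛ)]
  have h2 : v₀ = c := by
    calc v₀ = v₀ * (u₀ * c) := by rw [h1, mul_one]
    _ = (v₀ * u₀) * c := by rw [mul_assoc]
    _ = c := by rw [hvu, one_mul]
  rw [h2]
  exact SetLike.coe_mem _

/-- The degree-`μ` component of the graded matrix ring `Mₙ(R)(γ₁,…,γₙ)`:
a matrix is homogeneous of degree `μ` exactly when its `(i,j)` entry lies in
`R_{μ + γ j - γ i}`. -/
def gmatComp {Γ R : Type*} [AddCommGroup Γ] [Ring R] (ℛ : Γ → AddSubgroup R)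
    {n : ℕ} (γ : Fin n → Γ) (μ : Γ) : Set (Matrix (Fin n) (Fin n) R) :=
  {x | ∀ i j, x i j ∈ ℛ (μ + γ j - γ i)}

/-- If `u₀ ∈ R_δ` is invertible (with two-sided inverse `v₀`) and `u` is the
diagonal matrix `diag(u₀, 1, …, 1)` (with inverse `w = diag(v₀, 1, …, 1)`),
then `x ↦ u⁻¹ x u` is a graded ring isomorphism
`Mₙ(R)(γ₁, γ₂, …, γₙ) ≅ Mₙ(R)(γ₁+δ, γ₂, …, γₙ)`. -/
theorem stmt2 {Γ R : Type*} [AddCommGroup Γ] [DecidableEq Γ] [Ring R]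
    (ℛ : Γ → AddSubgroup R) [GradedRing ℛ] (n : ℕ) (hn : 0 < n) (γ : Fin n → Γ)
    (δ : Γ) (u₀ v₀ : R) (hu₀ : u₀ ∈ ℛ δ) (huv : u₀ * v₀ = 1) (hvu : v₀ * u₀ = 1)
    (u w : Matrix (Fin n) (Fin n) R)
    (hu : u = Matrix.diagonal (fun i : Fin n => if (i : ℕ) = 0 then u₀ else 1))
    (hw : w = Matrix.diagonal (fun i : Fin n => if (i : ℕ) = 0 then v₀ else 1)) :
    u * w = 1 ∧ w * u = 1 ∧
    ∃ φ : Matrix (Fin n) (Fin n) R ≃+* Matrix (Fin n) (Fin n) R,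
      (∀ x, φ x = w * x * u) ∧
      ∀ μ : Γ, φ '' gmatComp ℛ γ μ =
        gmatComp ℛ (fun i => if (i : ℕ) = 0 then γ i + δ else γ i) μ := by
  have hv₀ : v₀ ∈ ℛ (-δ) := inv_homog ℛ hu₀ huv hvu
  have key1 : (fun i : Fin n => (if (i : ℕ) = 0 then u₀ else 1) *
      (if (i : ℕ) = 0 then v₀ else 1)) = fun _ => (1 : R) := by
    funext i; by_cases h : (i : ℕ) = 0 <;> simp [h, huv]
  have key2 : (fun i : Fin n => (if (i : ℕ) = 0 then v₀ else 1) *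
      (if (i : ℕ) = 0 then u₀ else 1)) = fun _ => (1 : R) := by
    funext i; by_cases h : (i : ℕ) = 0 <;> simp [h, hvu]
  have h1 : u * w = 1 := by
    rw [hu, hw, Matrix.diagonal_mul_diagonal, key1, Matrix.diagonal_one]
  have h2 : w * u = 1 := by
    rw [hu, hw, Matrix.diagonal_mul_diagonal, key2, Matrix.diagonal_one]
  refine ⟨h1, h2, ?_⟩
  refine ⟨{ toFun := fun x => w * x * u
            invFun := fun x => u * x * w
            left_inv := fun x => by
              show u * (w * x * u) * w = x
              rw [← mul_assoc, ← mul_assoc, h1, one_mul, mul_assoc, h1, mul_one]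
            right_inv := fun x => by
              show w * (u * x * w) * u = x
              rw [← mul_assoc, ← mul_assoc, h2, one_mul, mul_assoc, h2, mul_one]
            map_mul' := fun a b => by
              show w * (a * b) * u = (w * a * u) * (w * b * u)
              simp only [mul_assoc]
              rw [← mul_assoc u w, h1, one_mul]
            map_add' := fun a b => by
              show w * (a + b) * u = w * a * u + w * b * u
              rw [mul_add, add_mul] }, fun x => rfl, ?_⟩
  intro μ
  have entry : ∀ (a b x : Matrix (Fin n) (Fin n) R)
      (fa fb : Fin n → R) (i j : Fin n), a = Matrix.diagonal fa → b = Matrix.diagonal fb →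
      (a * x * b) i j = fa i * x i j * fb j := by
    intro a b x fa fb i j ha hb
    rw [ha, hb, Matrix.mul_diagonal, Matrix.diagonal_mul]
  ext y
  constructor
  · rintro ⟨x, hx, rfl⟩
    intro i j
    show (w * x * u) i j ∈ _
    rw [entry w u x _ _ i j hw hu]
    have hxij := hx i j
    by_cases hi : (i : ℕ) = 0 <;> by_cases hj : (j : ℕ) = 0 <;>
      simp only [hi, hj, reduceIte, one_mul, mul_one]
    · have he : μ + (γ j + δ) - (γ i + δ) = -δ + (μ + γ j - γ i) + δ := by abel
      rw [he]
      exact SetLike.mul_mem_graded (SetLike.mul_mem_graded hv₀ hxij) hu₀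
    · have he : μ + γ j - (γ i + δ) = -δ + (μ + γ j - γ i) := by abel
      rw [he]
      exact SetLike.mul_mem_graded hv₀ hxij
    · have he : μ + (γ j + δ) - γ i = (μ + γ j - γ i) + δ := by abel
      rw [he]
      exact SetLike.mul_mem_graded hxij hu₀
    · exact hxij
  · intro hy
    refine ⟨u * y * w, ?_, ?_⟩
    · intro i j
      rw [entry u w y _ _ i j hu hw]
      have hyij := hy i j
      simp only at hyij
      by_cases hi : (i : ℕ) = 0 <;> by_cases hj : (j : ℕ) = 0 <;>
        simp only [hi, hj, reduceIte, one_mul, mul_one] at hyij ⊢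
      · have he : μ + γ j - γ i = δ + (μ + (γ j + δ) - (γ i + δ)) + -δ := by abel
        rw [he]
        exact SetLike.mul_mem_graded (SetLike.mul_mem_graded hu₀ hyij) hv₀
      · have he : μ + γ j - γ i = δ + (μ + γ j - (γ i + δ)) := by abel
        rw [he]
        exact SetLike.mul_mem_graded hu₀ hyij
      · have he : μ + γ j - γ i = (μ + (γ j + δ) - γ i) + -δ := by abel
        rw [he]
        exact SetLike.mul_mem_graded hyij hv₀
      · exact hyij
    · show w * (u * y * w) * u = y
      rw [← mul_assoc, ← mul_assoc, h2, one_mul, mul_assoc, h2, mul_one]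
end

section
/- Let K be a field trivially ℤ-graded, n a positive integer, and γ_1,…,γ_n arbitrary integers. Let g = min{γ_1,…,γ_n}, k = max{γ_1,…,γ_n} − g, and for 0 ≤ i ≤ k let l_i be the number of indices j with γ_j = g + i. Then l_0 > 0, l_k > 0, l_0 + l_1 + … + l_k = n, and M_n(K)(γ_1,…,γ_n) is graded isomorphic to M_n(K)(0 repeated l_0 times, 1 repeated l_1 times, …, k repeated l_k times). Moreover, these data are unique for the graded isomorphism class: if M_n(K)(0 repeated l_0 times, …, k repeated l_k times) is graded isomorphic to M_n(K)(0 repeated l'_0 times, …, k' repeated l'_{k'} times), where l_1,…,l_{k−1} and l'_1,…,l'_{k'−1} are nonnegative, l_0, l_k, l'_0, l'_{k'} are positive, and both lists of multiplicities sum to n, then k = k' and l_i = l'_i for all i = 0,…,k. -/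
/-- Degree-`d` component of `Mₙ(K)(γ₁,…,γₙ)` over a trivially ℤ-graded field `K`:
the `K`-linear span of the matrix units `e i j` with `γ i - γ j = d`, i.e. the
matrices vanishing at every position `(i,j)` with `γ i - γ j ≠ d`. -/
def matComp (K : Type*) [Field K] {n : ℕ} (γ : Fin n → ℤ) (d : ℤ) :
    Set (Matrix (Fin n) (Fin n) K) :=
  {x | ∀ i j, γ i - γ j ≠ d → x i j = 0}

/-- `Mₙ(K)(γ₁,…,γₙ)` and `Mₘ(K)(δ₁,…,δₘ)` are graded isomorphic: there is a ring
isomorphism mapping each degree-`d` component onto the degree-`d` component. -/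
def GrIsoMat (K : Type*) [Field K] {n m : ℕ} (γ : Fin n → ℤ) (δ : Fin m → ℤ) : Prop :=
  ∃ φ : Matrix (Fin n) (Fin n) K ≃+* Matrix (Fin m) (Fin m) K,
    ∀ d : ℤ, φ '' matComp K γ d = matComp K δ d

/-- `δ : Fin n → ℤ` is the list `0` repeated `l 0` times, `1` repeated `l 1`
times, …, `k` repeated `l k` times. -/
def IsMultList {n : ℕ} (k : ℕ) (l : ℕ → ℕ) (δ : Fin n → ℤ) : Prop :=
  Monotone δ ∧ (∀ j, 0 ≤ δ j ∧ δ j ≤ (k : ℤ)) ∧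
    ∀ i : ℕ, i ≤ k → (Finset.univ.filter fun j => δ j = (i : ℤ)).card = l i

/-!
Sorting `γ` and subtracting its minimum is a graded isomorphism (conjugation by a permutation
matrix), which gives the normal form. For uniqueness: a graded ring isomorphism `φ` keeps the
nonzero components nonzero, hence preserves the top degree `k`; it preserves the centre `K • 1`,
so it is semilinear over the induced automorphism of `K`. When all degrees lie in `[0, k]` and
`0` is attained, the products of degree `k` and degree `-q` generate additively the block of
matrices supported on rows of degree `k` and columns of degree `q`, of dimension `l k * l q`.
Comparing these dimensions, first for `q = k`, then for every `q`, gives the multiplicities.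
-/

open Matrix Pointwise Finset

section Semilinear

variable {K ι : Type*} [Field K] [Fintype ι] [DecidableEq ι]

theorem RingEquiv.exists_map_smul_one (φ : Matrix ι ι K ≃+* Matrix ι ι K) (c : K) :
    ∃ d : K, φ (c • 1) = d • 1 := by
  have hc : c • (1 : Matrix ι ι K) ∈ Set.center (Matrix ι ι K) := by
    simpa [Algebra.algebraMap_eq_smul_one] using Set.algebraMap_mem_center (A := Matrix ι ι K) c
  have hφc : φ (c • 1) ∈ Set.center (Matrix ι ι K) := (Subsemiring.centerCongr φ ⟨_, hc⟩).2
  rw [center_eq_range] at hφc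
  obtain ⟨d, hd⟩ := hφc
  exact ⟨d, by rw [← hd, smul_one_eq_diagonal]; rfl⟩

theorem RingEquiv.exists_bijective_map_smul [Nonempty ι]
    (φ : Matrix ι ι K ≃+* Matrix ι ι K) :
    ∃ τ : K → K, Function.Bijective τ ∧ ∀ (c : K) (x : Matrix ι ι K), φ (c • x) = τ c • φ x := by
  choose τ hτ using φ.exists_map_smul_one
  have smul_one_inj := smul_left_injective K (one_ne_zero (α := Matrix ι ι K))
  refine ⟨τ, ⟨fun c c' h => smul_one_inj (φ.injective ?_), fun d => ?_⟩, fun c x => ?_⟩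
  · simp only [hτ, h]
  · obtain ⟨c, hc⟩ := φ.symm.exists_map_smul_one d
    refine ⟨c, smul_one_inj ?_⟩
    simp only [← hτ, ← hc, RingEquiv.apply_symm_apply]
  · rw [← smul_one_mul, map_mul, hτ, smul_one_mul]

end Semilinear

theorem Submodule.finrank_eq_of_image_eq_of_map_smul {R V W : Type*} [Semiring R]
    [AddCommMonoid V] [Module R V] [AddCommMonoid W] [Module R W]
    (τ : R → R) (hτ : Function.Bijective τ) (φ : V ≃+ W)
    (hφ : ∀ (c : R) x, φ (c • x) = τ c • φ x)
    {P : Submodule R V} {Q : Submodule R W} (h : φ '' P = Q) :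
    Module.finrank R P = Module.finrank R Q := by
  have hmem (x : V) : x ∈ P ↔ φ x ∈ Q := by
    rw [← SetLike.mem_coe, ← SetLike.mem_coe (x := φ x), ← h, φ.injective.mem_set_image]
  let j : P ≃+ Q :=
    { φ.toEquiv.subtypeEquiv hmem with
      map_add' := fun x y => Subtype.ext (map_add φ (x : V) y) }
  simpa [Module.finrank] using congr_arg Cardinal.toNat
    (lift_rank_eq_of_equiv_equiv τ j hτ fun c x => Subtype.ext (hφ c (x : V)))

section Components

variable {K : Type*} [Field K] {n m : ℕ}

theorem single_mem_matComp {γ : Fin n → ℤ} {i j : Fin n} {d : ℤ} (h : γ i - γ j = d) (c : K) :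
    single i j c ∈ matComp K γ d := by
  intro r s hrs
  apply single_apply_of_ne
  rintro ⟨rfl, rfl⟩
  exact hrs h

theorem exists_sub_eq_of_mem_matComp {γ : Fin n → ℤ} {d : ℤ} {x : Matrix (Fin n) (Fin n) K}
    (hx : x ∈ matComp K γ d) (hx0 : x ≠ 0) : ∃ i j, γ i - γ j = d := by
  by_contra! h
  exact hx0 (Matrix.ext fun i j => hx i j (h i j))

theorem GrIsoMat.symm {γ : Fin n → ℤ} {δ : Fin m → ℤ} (h : GrIsoMat K γ δ) :
    GrIsoMat K δ γ := by
  obtain ⟨φ, hφ⟩ := h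
  exact ⟨φ.symm, fun d => by rw [← hφ d, ← Set.image_comp]; simp⟩

theorem GrIsoMat.exists_sub_eq {γ : Fin n → ℤ} {δ : Fin m → ℤ} (h : GrIsoMat K γ δ)
    (i j : Fin n) : ∃ i' j', δ i' - δ j' = γ i - γ j := by
  obtain ⟨φ, hφ⟩ := h
  have hsingle : single i j (1 : K) ≠ 0 := fun h =>
    one_ne_zero (α := K) (by simpa using congr_fun₂ h i j)
  refine exists_sub_eq_of_mem_matComp (x := φ (single i j 1)) ?_
    ((map_ne_zero_iff _ φ.injective).mpr hsingle)
  rw [← hφ]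
  exact Set.mem_image_of_mem _ (single_mem_matComp rfl 1)

theorem grIsoMat_comp_sub (γ : Fin n → ℤ) (e : Fin m ≃ Fin n) (c : ℤ) :
    GrIsoMat K γ (fun i => γ (e i) - c) := by
  refine ⟨(reindexAlgEquiv K K e.symm).toRingEquiv, fun d => ?_⟩
  ext x
  constructor
  · rintro ⟨y, hy, rfl⟩ i j hij
    exact hy (e i) (e j) fun h => hij (by simp only; omega)
  · intro hx
    refine ⟨reindex e e x, fun i j hij => hx (e.symm i) (e.symm j) (by simpa using hij), ?_⟩
    ext i j
    simp

end Components

section Blocks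

variable {K : Type*} [Field K] {n : ℕ}

variable (K) in
def blockSubmodule (δ : Fin n → ℤ) (p q : ℤ) : Submodule K (Matrix (Fin n) (Fin n) K) where
  carrier := {x | ∀ i j, ¬(δ i = p ∧ δ j = q) → x i j = 0}
  add_mem' hx hy i j h := by rw [Matrix.add_apply, hx i j h, hy i j h, add_zero]
  zero_mem' _ _ _ := rfl
  smul_mem' c x hx i j h := by rw [Matrix.smul_apply, hx i j h, smul_zero]

def blockSubmoduleEquiv (δ : Fin n → ℤ) (p q : ℤ) :
    blockSubmodule K δ p q ≃ₗ[K] Matrix {i // δ i = p} {j // δ j = q} K where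
  toFun x := x.1.submatrix Subtype.val Subtype.val
  map_add' _ _ := rfl
  map_smul' _ _ := rfl
  invFun y := ⟨of fun i j => if h : δ i = p ∧ δ j = q then y ⟨i, h.1⟩ ⟨j, h.2⟩ else 0,
    fun _ _ h => dif_neg h⟩
  left_inv x := by
    ext i j
    by_cases h : δ i = p ∧ δ j = q
    · simp [h]
    · simp [h, x.2 i j h]
  right_inv y := by
    ext i j
    simp [i.2, j.2]

theorem finrank_blockSubmodule (δ : Fin n → ℤ) (p q : ℤ) :
    Module.finrank K (blockSubmodule K δ p q) = #{i | δ i = p} * #{j | δ j = q} := by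
  rw [(blockSubmoduleEquiv δ p q).finrank_eq, Module.finrank_matrix, Module.finrank_self,
    mul_one, Fintype.card_subtype, Fintype.card_subtype]

theorem closure_matComp_mul_matComp {δ : Fin n → ℤ} {k : ℤ} (hδ : ∀ j, 0 ≤ δ j ∧ δ j ≤ k)
    {u : Fin n} (hu : δ u = 0) (q : ℤ) :
    AddSubmonoid.closure (matComp K δ k * matComp K δ (-q)) =
      (blockSubmodule K δ k q).toAddSubmonoid := by
  apply le_antisymm
  · rw [AddSubmonoid.closure_le]
    intro z hz r s hrs
    obtain ⟨x, hx, y, hy, rfl⟩ := Set.mem_mul.mp hz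
    rw [mul_apply]
    refine Finset.sum_eq_zero fun t _ => ?_
    by_contra hne
    obtain ⟨hx0, hy0⟩ := mul_ne_zero_iff.mp hne
    have hrt : δ r - δ t = k := not_not.mp (mt (hx r t) hx0)
    have hts : δ t - δ s = -q := not_not.mp (mt (hy t s) hy0)
    have := hδ r; have := hδ t
    exact hrs ⟨by omega, by omega⟩
  · intro x hx
    rw [matrix_eq_sum_single x]
    refine AddSubmonoid.sum_mem _ fun r _ => AddSubmonoid.sum_mem _ fun s _ => ?_
    by_cases hrs : δ r = k ∧ δ s = q
    · refine AddSubmonoid.subset_closure ⟨single r u 1, single_mem_matComp (by omega) 1,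
        single u s (x r s), single_mem_matComp (by omega) _, ?_⟩
      simp only [single_mul_single_same, one_mul]
    · rw [hx r s hrs, single_zero]
      exact zero_mem _

theorem image_blockSubmodule {δ δ' : Fin n → ℤ}
    (φ : Matrix (Fin n) (Fin n) K ≃+* Matrix (Fin n) (Fin n) K)
    (hφ : ∀ d, φ '' matComp K δ d = matComp K δ' d) {k : ℤ} (hδ : ∀ j, 0 ≤ δ j ∧ δ j ≤ k)
    (hδ' : ∀ j, 0 ≤ δ' j ∧ δ' j ≤ k) {u u' : Fin n} (hu : δ u = 0) (hu' : δ' u' = 0) (q : ℤ) :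
    φ '' blockSubmodule K δ k q = blockSubmodule K δ' k q := by
  have := congr_arg SetLike.coe
    (AddMonoidHom.map_mclosure φ (matComp K δ k * matComp K δ (-q)))
  rw [AddSubmonoid.coe_map, Set.image_mul, hφ, hφ, closure_matComp_mul_matComp hδ hu,
    closure_matComp_mul_matComp hδ' hu'] at this
  exact this

end Blocks

section MultList

variable {n : ℕ} {k : ℕ} {a : ℕ → ℕ} {δ : Fin n → ℤ}

theorem IsMultList.exists_eq (h : IsMultList k a δ) {i : ℕ} (hi : i ≤ k) (ha : 0 < a i) :
    ∃ j, δ j = i := by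
  rw [← h.2.2 i hi] at ha
  obtain ⟨j, hj⟩ := Finset.card_pos.mp ha
  exact ⟨j, (Finset.mem_filter.mp hj).2⟩

variable {K : Type*} [Field K] {k' : ℕ} {b : ℕ → ℕ} {δ' : Fin n → ℤ}

theorem GrIsoMat.le_of_isMultList (h : GrIsoMat K δ δ') (hA : IsMultList k a δ)
    (ha0 : 0 < a 0) (hak : 0 < a k) (hB : IsMultList k' b δ') : k ≤ k' := by
  obtain ⟨r, hr⟩ := hA.exists_eq le_rfl hak
  obtain ⟨u, hu⟩ := hA.exists_eq k.zero_le ha0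
  obtain ⟨i, j, hij⟩ := h.exists_sub_eq r u
  have := hB.2.1 i; have := hB.2.1 j
  omega

theorem GrIsoMat.finrank_blockSubmodule_eq (h : GrIsoMat K δ δ') (hA : IsMultList k a δ)
    (ha0 : 0 < a 0) (hB : IsMultList k b δ') (hb0 : 0 < b 0) (q : ℤ) :
    Module.finrank K (blockSubmodule K δ k q) = Module.finrank K (blockSubmodule K δ' k q) := by
  obtain ⟨φ, hφ⟩ := h
  obtain ⟨u, hu⟩ := hA.exists_eq k.zero_le ha0
  obtain ⟨u', hu'⟩ := hB.exists_eq k.zero_le hb0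
  have : Nonempty (Fin n) := ⟨u⟩
  obtain ⟨τ, hτ, hφτ⟩ := φ.exists_bijective_map_smul
  exact Submodule.finrank_eq_of_image_eq_of_map_smul τ hτ φ.toAddEquiv hφτ
    (image_blockSubmodule φ hφ hA.2.1 hB.2.1 hu hu' q)

theorem GrIsoMat.eq_of_isMultList (h : GrIsoMat K δ δ') (hA : IsMultList k a δ)
    (ha0 : 0 < a 0) (hak : 0 < a k) (hB : IsMultList k' b δ') (hb0 : 0 < b 0) (hbk : 0 < b k') :
    k = k' ∧ ∀ i ≤ k, a i = b i := by
  obtain rfl : k = k' := (h.le_of_isMultList hA ha0 hak hB).antisymm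
    (h.symm.le_of_isMultList hB hb0 hbk hA)
  have hprod : ∀ i ≤ k, a k * a i = b k * b i := fun i hi => by
    have := h.finrank_blockSubmodule_eq hA ha0 hB hb0 i
    rwa [finrank_blockSubmodule, finrank_blockSubmodule, hA.2.2 k le_rfl, hA.2.2 i hi,
      hB.2.2 k le_rfl, hB.2.2 i hi] at this
  have htop : a k = b k := Nat.mul_self_inj.mp (hprod k le_rfl)
  refine ⟨rfl, fun i hi => Nat.eq_of_mul_eq_mul_left hak ?_⟩
  rw [hprod i hi, htop]

end MultList

section Normalization

variable {n : ℕ} {γ : Fin n → ℤ} {g : ℤ} {k : ℕ}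

theorem sum_range_card_filter_eq_add (hγ : ∀ j, g ≤ γ j ∧ γ j ≤ g + k) :
    ∑ i ∈ range (k + 1), #{j | γ j = g + i} = n := by
  have hfib := card_eq_sum_card_fiberwise (s := univ) (t := range (k + 1))
    (f := fun j => (γ j - g).toNat) fun j _ => by
      have := hγ j
      simp only [coe_range, Set.mem_Iio]
      omega
  rw [card_univ, Fintype.card_fin] at hfib
  refine (sum_congr rfl fun i _ => congr_arg card (filter_congr fun j _ => ?_)).trans hfib.symm
  have := hγ j
  omega

theorem isMultList_comp_sort_sub (hγ : ∀ j, g ≤ γ j ∧ γ j ≤ g + k) :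
    IsMultList k (fun i : ℕ => #{j | γ j = g + i}) (fun j => γ (Tuple.sort γ j) - g) := by
  refine ⟨fun i j hij => ?_, fun j => ?_, fun i _ => ?_⟩ <;> dsimp only
  · have : γ (Tuple.sort γ i) ≤ γ (Tuple.sort γ j) := Tuple.monotone_sort γ hij
    omega
  · have := hγ (Tuple.sort γ j)
    omega
  · rw [← Fintype.card_subtype, ← Fintype.card_subtype]
    exact Fintype.card_congr ((Tuple.sort γ).subtypeEquiv fun j => by omega)

end Normalization

theorem stmt3_general (K : Type*) [Field K] (n : ℕ) (γ : Fin n → ℤ)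
    (g : ℤ) (hg : IsLeast (Set.range γ) g)
    (k : ℕ) (hk : IsGreatest (Set.range γ) (g + (k : ℤ)))
    (l : ℕ → ℕ)
    (hl : ∀ i : ℕ, l i = (Finset.univ.filter fun j => γ j = g + (i : ℤ)).card) :
    0 < l 0 ∧ 0 < l k ∧ (∑ i ∈ Finset.range (k + 1), l i) = n ∧
    (∃ δ : Fin n → ℤ, IsMultList k l δ ∧ GrIsoMat K γ δ) ∧
    -- uniqueness of the representatives for the graded isomorphism class
    (∀ (k' k'' : ℕ) (a b : ℕ → ℕ) (δ δ' : Fin n → ℤ),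
      0 < a 0 → 0 < a k' → 0 < b 0 → 0 < b k'' →
      (∑ i ∈ Finset.range (k' + 1), a i) = n →
      (∑ i ∈ Finset.range (k'' + 1), b i) = n →
      IsMultList k' a δ → IsMultList k'' b δ' →
      GrIsoMat K δ δ' →
      k' = k'' ∧ ∀ i : ℕ, i ≤ k' → a i = b i) := by
  obtain rfl : l = fun i : ℕ => #{j | γ j = g + i} := funext hl
  obtain ⟨j₀, hj₀⟩ := hg.1
  obtain ⟨j₁, hj₁⟩ := hk.1
  have hγ : ∀ j, g ≤ γ j ∧ γ j ≤ g + k :=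
    fun j => ⟨hg.2 (Set.mem_range_self j), hk.2 (Set.mem_range_self j)⟩
  refine ⟨card_pos.mpr ⟨j₀, by simp [hj₀]⟩, card_pos.mpr ⟨j₁, by simp [hj₁]⟩,
    sum_range_card_filter_eq_add hγ, ⟨_, isMultList_comp_sort_sub hγ, grIsoMat_comp_sub γ _ g⟩, ?_⟩
  intro k' k'' a b δ δ' ha0 hak hb0 hbk _ _ hA hB h
  exact h.eq_of_isMultList hA ha0 hak hB hb0 hbk

theorem stmt3 (K : Type*) [Field K] (n : ℕ) (hn : 0 < n) (γ : Fin n → ℤ)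
    (g : ℤ) (hg : IsLeast (Set.range γ) g)
    (k : ℕ) (hk : IsGreatest (Set.range γ) (g + (k : ℤ)))
    (l : ℕ → ℕ)
    (hl : ∀ i : ℕ, l i = (Finset.univ.filter fun j => γ j = g + (i : ℤ)).card) :
    0 < l 0 ∧ 0 < l k ∧ (∑ i ∈ Finset.range (k + 1), l i) = n ∧
    (∃ δ : Fin n → ℤ, IsMultList k l δ ∧ GrIsoMat K γ δ) ∧
    -- uniqueness of the representatives for the graded isomorphism class
    (∀ (k' k'' : ℕ) (a b : ℕ → ℕ) (δ δ' : Fin n → ℤ),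
      0 < a 0 → 0 < a k' → 0 < b 0 → 0 < b k'' →
      (∑ i ∈ Finset.range (k' + 1), a i) = n →
      (∑ i ∈ Finset.range (k'' + 1), b i) = n →
      IsMultList k' a δ → IsMultList k'' b δ' →
      GrIsoMat K δ δ' →
      k' = k'' ∧ ∀ i : ℕ, i ≤ k' → a i = b i) :=
  stmt3_general K n γ g hg k hk l hl
end

section
/- For every nonnegative integer k and all positive integers l_1,…,l_k there exists a finite acyclic quiver E with exactly one sink v such that: the trivial path at v is the only path of length 0 ending at v; for each i = 1,…,k, the number of paths of length i ending at v equals l_i; and no path of length greater than k ends at v. In particular the total number of paths ending at v is 1 + l_1 + … + l_k. -/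
/-- A quiver (directed graph): vertices, edges, source and range maps. -/
structure Quiv where
  V : Type
  E : Type
  src : E → V
  rng : E → V

namespace Quiv

/-- `es` is a path from `u` to `v` (the empty list is the trivial path at `v`,
in which case `u = v`; a nonempty list is a path `e₁…eₙ` with
`rng eₜ = src eₜ₊₁`, starting at `src e₁ = u` and ending at `rng eₙ = v`). -/
def IsPathFromTo (G : Quiv) (u : G.V) (es : List G.E) (v : G.V) : Prop :=
  es.Chain' (fun e f => G.rng e = G.src f) ∧
  (es = [] → u = v) ∧
  (∀ e, es.head? = some e → G.src e = u) ∧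
  (∀ e, es.getLast? = some e → G.rng e = v)

/-- `es` is a path ending at `v`. -/
def IsPathTo (G : Quiv) (es : List G.E) (v : G.V) : Prop :=
  ∃ u, G.IsPathFromTo u es v

/-- A sink is a vertex emitting no edges. -/
def IsSink (G : Quiv) (v : G.V) : Prop := ∀ e : G.E, G.src e ≠ v

/-- A cycle: a path of positive length ending at its own source, in which
distinct edges have distinct sources. -/
def IsCycle (G : Quiv) (es : List G.E) : Prop :=
  es ≠ [] ∧ (∃ u, G.IsPathFromTo u es u) ∧
  ∀ e ∈ es, ∀ f ∈ es, e ≠ f → G.src e ≠ G.src f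

end Quiv

/-!
Take `l i` vertices on level `i` for `1 ≤ i ≤ k` and a single vertex `v` on level `0`, and let
every vertex of level `i ≥ 1` emit exactly one edge, to a fixed vertex of level `i - 1`. The level
drops by one along every edge, so there are no cycles and `v` is the only sink; and since every
vertex emits at most one edge, a path ending at `v` is determined by its first vertex, whose level
is the length of the path. Hence the paths of length `i` ending at `v` correspond to the vertices
of level `i`, and all paths ending at `v` to all vertices.
-/

namespace Quiv

variable {G : Quiv} {h : G.V → ℕ}

@[simp]
theorem isPathFromTo_nil {u w : G.V} : G.IsPathFromTo u [] w ↔ u = w := by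
  set_option linter.deprecated false in
  simp [IsPathFromTo, List.Chain']

@[simp]
theorem isPathFromTo_cons {u w : G.V} {e : G.E} {es : List G.E} :
    G.IsPathFromTo u (e :: es) w ↔ G.src e = u ∧ G.IsPathFromTo (G.rng e) es w := by
  set_option linter.deprecated false in
  cases es with
  | nil => simp [IsPathFromTo, List.Chain', eq_comm]
  | cons f es => simp [IsPathFromTo, List.Chain', and_assoc, eq_comm]; tauto

theorem IsPathFromTo.head?_src_getD {u w : G.V} {es : List G.E}
    (hp : G.IsPathFromTo u es w) : (es.head?.map G.src).getD w = u := by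
  cases es <;> simp_all

theorem IsPathFromTo.height_eq (hh : ∀ e, h (G.src e) = h (G.rng e) + 1) {u w : G.V}
    {es : List G.E} (hp : G.IsPathFromTo u es w) : h u = h w + es.length := by
  induction es generalizing u with
  | nil => simp_all
  | cons e es ih =>
    obtain ⟨rfl, hrest⟩ := isPathFromTo_cons.mp hp
    rw [hh, ih hrest, List.length_cons, add_assoc]

theorem not_isCycle_of_height (hh : ∀ e, h (G.src e) = h (G.rng e) + 1) (es : List G.E) :
    ¬ G.IsCycle es := by
  rintro ⟨hne, ⟨u, hp⟩, -⟩
  have := hp.height_eq hh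
  exact hne (List.length_eq_zero_iff.mp (by omega))

theorem exists_isPathFromTo_of_height (hh : ∀ e, h (G.src e) = h (G.rng e) + 1)
    (hemit : ∀ u, h u ≠ 0 → ∃ e, G.src e = u) {v : G.V} (hroot : ∀ u, h u = 0 → u = v)
    (u : G.V) : ∃ es, G.IsPathFromTo u es v := by
  induction hu : h u generalizing u with
  | zero => exact ⟨[], isPathFromTo_nil.mpr (hroot u hu)⟩
  | succ n ih =>
    obtain ⟨e, rfl⟩ := hemit u (by omega)
    obtain ⟨es, hp⟩ := ih (G.rng e) (by rw [hh] at hu; omega)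
    exact ⟨e :: es, isPathFromTo_cons.mpr ⟨rfl, hp⟩⟩

theorem IsPathFromTo.eq_of_length_eq (hsrc : Function.Injective G.src) {u w w' : G.V}
    {es es' : List G.E} (hp : G.IsPathFromTo u es w) (hp' : G.IsPathFromTo u es' w')
    (hlen : es.length = es'.length) : es = es' := by
  induction es generalizing u es' with
  | nil => exact (List.length_eq_zero_iff.mp hlen.symm).symm
  | cons e es ih =>
    cases es' with
    | nil => simp at hlen
    | cons e' es' =>
      obtain ⟨he, hrest⟩ := isPathFromTo_cons.mp hp
      obtain ⟨he', hrest'⟩ := isPathFromTo_cons.mp hp'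
      obtain rfl : e = e' := hsrc (he.trans he'.symm)
      rw [ih hrest hrest' (Nat.succ_inj.mp hlen)]

theorem ncard_pathsTo_eq_ncard_height (hh : ∀ e, h (G.src e) = h (G.rng e) + 1)
    (hsrc : Function.Injective G.src) (hemit : ∀ u, h u ≠ 0 → ∃ e, G.src e = u) {v : G.V}
    (hroot : ∀ u, h u = 0 ↔ u = v) (P : ℕ → Prop) :
    {es | G.IsPathTo es v ∧ P es.length}.ncard = {u | P (h u)}.ncard := by
  have hv : h v = 0 := (hroot v).mpr rfl
  have hlen {u es} (hp : G.IsPathFromTo u es v) : es.length = h u := by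
    rw [hp.height_eq hh, hv, zero_add]
  refine Set.ncard_congr (fun es _ => (es.head?.map G.src).getD v) ?_ ?_ ?_
  · rintro es ⟨⟨u, hp⟩, hP⟩
    rwa [Set.mem_ofPred_eq, hp.head?_src_getD, ← hlen hp]
  · rintro es es' ⟨⟨u, hp⟩, -⟩ ⟨⟨u', hp'⟩, -⟩ hstart
    rw [hp.head?_src_getD, hp'.head?_src_getD] at hstart
    subst hstart
    exact hp.eq_of_length_eq hsrc hp' ((hlen hp).trans (hlen hp').symm)
  · intro u hu
    obtain ⟨es, hp⟩ := exists_isPathFromTo_of_height hh hemit (fun u => (hroot u).mp) u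
    exact ⟨es, ⟨⟨u, hp⟩, by rwa [hlen hp]⟩, hp.head?_src_getD⟩

def layered (k : ℕ) (c : Fin (k + 1) → ℕ) (hc : ∀ i, 0 < c i) : Quiv where
  V := Σ i : Fin (k + 1), Fin (c i)
  E := {u : Σ i : Fin (k + 1), Fin (c i) // u.1 ≠ 0}
  src e := e.1
  rng e := ⟨(e.1.1.pred e.2).castSucc, ⟨0, hc _⟩⟩

namespace layered

variable {k : ℕ} {c : Fin (k + 1) → ℕ} {hc : ∀ i, 0 < c i}

instance : Finite (layered k c hc).V := inferInstanceAs (Finite (Σ i : Fin (k + 1), Fin (c i)))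

instance : Finite (layered k c hc).E :=
  inferInstanceAs (Finite {u : Σ i : Fin (k + 1), Fin (c i) // u.1 ≠ 0})

theorem natCard_V : Nat.card (layered k c hc).V = ∑ i, c i := by
  simp [layered]

def root : (layered k c hc).V := ⟨0, ⟨0, hc 0⟩⟩

def height (u : (layered k c hc).V) : ℕ := u.1

theorem ncard_height_eq (i : Fin (k + 1)) :
    {u : (layered k c hc).V | height u = i}.ncard = c i := by
  simp only [height, Fin.val_inj]
  rw [← Nat.card_coe_set_eq]
  exact (Nat.card_congr (Equiv.sigmaSubtype i)).trans (Nat.card_fin _)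

theorem height_src (e : (layered k c hc).E) :
    height ((layered k c hc).src e) = height ((layered k c hc).rng e) + 1 := by
  have : (e.1.1 : ℕ) ≠ 0 := Fin.val_ne_iff.mpr e.2
  simp only [height, layered, Fin.val_castSucc, Fin.val_pred]
  omega

theorem height_eq_zero_iff (hc0 : c 0 = 1) (u : (layered k c hc).V) :
    height u = 0 ↔ u = root := by
  refine ⟨fun hu => ?_, by rintro rfl; rfl⟩
  obtain ⟨i, j⟩ := u
  obtain rfl : i = 0 := Fin.ext hu
  obtain rfl : j = ⟨0, hc 0⟩ := Fin.ext (by omega)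
  rfl

theorem exists_src_eq {u : (layered k c hc).V} (hu : height u ≠ 0) :
    ∃ e, (layered k c hc).src e = u :=
  ⟨Subtype.mk u fun h0 => hu (by simp [height, h0]), rfl⟩

theorem isSink_iff (hc0 : c 0 = 1) (u : (layered k c hc).V) :
    (layered k c hc).IsSink u ↔ u = root := by
  rw [← height_eq_zero_iff hc0]
  constructor
  · intro hu
    by_contra h0
    obtain ⟨e, he⟩ := exists_src_eq h0
    exact hu e he
  · intro hu e he
    have := height_src e
    rw [he, hu] at this
    omega

theorem ncard_pathsTo_root (hc0 : c 0 = 1) (P : ℕ → Prop) :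
    {es | (layered k c hc).IsPathTo es root ∧ P es.length}.ncard =
      {u : (layered k c hc).V | P (height u)}.ncard :=
  Quiv.ncard_pathsTo_eq_ncard_height height_src Subtype.val_injective
    (fun _ => exists_src_eq) (height_eq_zero_iff hc0) P

theorem length_le_of_isPathTo {es : List (layered k c hc).E}
    (hp : (layered k c hc).IsPathTo es root) : es.length ≤ k := by
  obtain ⟨u, hp⟩ := hp
  have hu := hp.height_eq height_src
  have : height u < k + 1 := u.1.is_lt
  have : height (root (hc := hc)) = 0 := rfl
  omega

end layered

end Quiv

/-- For every `k ≥ 0` and positive `l 1, …, l k` there is a finite acyclic quiver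
with a unique sink `v` having exactly `l i` paths of length `i` ending at `v` for
`1 ≤ i ≤ k`, no longer paths, a unique (trivial) path of length `0`, and hence
`1 + l 1 + … + l k` paths ending at `v` in total. -/
theorem stmt8 (k : ℕ) (l : ℕ → ℕ) (hl : ∀ i, 1 ≤ i → i ≤ k → 0 < l i) :
    ∃ (G : Quiv) (v : G.V), Finite G.V ∧ Finite G.E ∧
      (∀ es : List G.E, ¬ G.IsCycle es) ∧
      G.IsSink v ∧ (∀ w, G.IsSink w → w = v) ∧
      (∀ es, G.IsPathTo es v → es.length = 0 → es = []) ∧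
      (∀ i, 1 ≤ i → i ≤ k → {es | G.IsPathTo es v ∧ es.length = i}.ncard = l i) ∧
      (∀ es, G.IsPathTo es v → es.length ≤ k) ∧
      {es | G.IsPathTo es v}.ncard = 1 + ∑ i ∈ Finset.Icc 1 k, l i := by
  set c : Fin (k + 1) → ℕ := fun i => if i = 0 then 1 else l i
  have hc (i : Fin (k + 1)) : 0 < c i := by
    by_cases hi : i = 0
    · simp [c, hi]
    · have : (i : ℕ) ≠ 0 := Fin.val_ne_iff.mpr hi
      simpa [c, hi] using hl i (by omega) (by omega)
  have hc0 : c 0 = 1 := by simp [c]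
  refine ⟨Quiv.layered k c hc, Quiv.layered.root, inferInstance, inferInstance,
    Quiv.not_isCycle_of_height Quiv.layered.height_src, (Quiv.layered.isSink_iff hc0 _).mpr rfl,
    fun w => (Quiv.layered.isSink_iff hc0 w).mp, fun es _ => List.eq_nil_of_length_eq_zero,
    fun i hi hik => ?_, fun es => Quiv.layered.length_le_of_isPathTo, ?_⟩
  · rw [Quiv.layered.ncard_pathsTo_root hc0 (· = i), Quiv.layered.ncard_height_eq ⟨i, by omega⟩]
    simp [c]
    omega
  · have := Quiv.layered.ncard_pathsTo_root hc0 (hc := hc) (fun _ => True)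
    simp only [and_true, Set.ofPred_true, Set.ncard_univ] at this
    rw [this, Quiv.layered.natCard_V, Fin.sum_univ_succ, hc0]
    simp only [c, Fin.succ_ne_zero, if_false, Fin.val_succ]
    rw [Fin.sum_univ_eq_sum_range (fun i => l (i + 1)), Finset.range_eq_Ico, Finset.sum_Ico_add',
      zero_add, Finset.Ico_add_one_right_eq_Icc]
end

section
/- Let K be a field. The ℤ-graded rings M_3(K[x^2,x^{-2}])(0,1,1) and M_3(K[x^2,x^{-2}])(0,1,2) are graded isomorphic. -/
open LaurentPolynomial

def LComp (K : Type*) [Field K] (m : ℕ) (d : ℤ) : Set (LaurentPolynomial K) :=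
  {p | ((m : ℤ) ∣ d ∧ ∃ a : K, p = C a * T (d / (m : ℤ))) ∨ (¬ (m : ℤ) ∣ d ∧ p = 0)}

def LMatComp (K : Type*) [Field K] (m : ℕ) {n : ℕ} (γ : Fin n → ℤ) (d : ℤ) :
    Set (Matrix (Fin n) (Fin n) (LaurentPolynomial K)) :=
  {x | ∀ i j, x i j ∈ LComp K m (d + γ j - γ i)}

/-!
Conjugation by a homogeneous invertible matrix is a graded isomorphism between shifted matrix
rings: conjugating by a permutation matrix permutes the shifts `γ`, conjugating by
`diag(x^{m a₁}, …, x^{m aₙ})` replaces `γ` by `γ - m a`, and adding the same constant to all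
shifts does not change the grading at all. Swapping the first two indices and then conjugating
by `diag(x², 1, 1)` turns `(0,1,1)` into `(-1,0,1)`, which is `(0,1,2)` up to a constant.
-/

namespace LaurentPolynomial

variable {R : Type*} [CommSemiring R] {ι : Type*} [Fintype ι] [DecidableEq ι]

noncomputable def diagonalTUnit (a : ι → ℤ) : (Matrix ι ι R[T;T⁻¹])ˣ where
  val := Matrix.diagonal fun i => T (a i)
  inv := Matrix.diagonal fun i => T (-a i)
  val_inv := by
    simp only [Matrix.diagonal_mul_diagonal, ← invOf_T, mul_invOf_self, Matrix.diagonal_one]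
  inv_val := by
    simp only [Matrix.diagonal_mul_diagonal, ← invOf_T, invOf_mul_self, Matrix.diagonal_one]

noncomputable def diagonalTConj (a : ι → ℤ) : Matrix ι ι R[T;T⁻¹] ≃+* Matrix ι ι R[T;T⁻¹] :=
  MulSemiringAction.toRingEquiv (ConjAct (Matrix ι ι R[T;T⁻¹])ˣ) _
    (ConjAct.toConjAct (diagonalTUnit a))

theorem diagonalTConj_apply (a : ι → ℤ) (A : Matrix ι ι R[T;T⁻¹]) (i j : ι) :
    diagonalTConj a A i j = A i j * T (a i - a j) := by
  rw [diagonalTConj, MulSemiringAction.toRingEquiv_apply_apply, ConjAct.units_smul_def,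
    ConjAct.ofConjAct_toConjAct]
  simp only [diagonalTUnit, Units.inv_mk, Matrix.diagonal_mul, Matrix.mul_diagonal, T_sub]
  ring

end LaurentPolynomial

section Grading

variable {K : Type*} [Field K] {m : ℕ}

theorem mul_T_mem_LComp (hm : m ≠ 0) {e : ℤ} {p : K[T;T⁻¹]} (hp : p ∈ LComp K m e) (c : ℤ) :
    p * T c ∈ LComp K m (e + m * c) := by
  rcases hp with ⟨hdvd, a, rfl⟩ | ⟨hndvd, rfl⟩
  · refine Or.inl ⟨dvd_add hdvd (dvd_mul_right _ _), a, ?_⟩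
    rw [Int.add_mul_ediv_left _ _ (by exact_mod_cast hm), T_add, mul_assoc]
  · exact Or.inr ⟨fun h => hndvd ((dvd_add_left (dvd_mul_right _ _)).mp h), zero_mul _⟩

theorem mul_T_mem_LComp_iff (hm : m ≠ 0) {e : ℤ} {p : K[T;T⁻¹]} (c : ℤ) :
    p * T c ∈ LComp K m (e + m * c) ↔ p ∈ LComp K m e := by
  refine ⟨fun h => ?_, fun h => mul_T_mem_LComp hm h c⟩
  simpa only [mul_T_assoc, add_neg_cancel, T_zero, mul_one, mul_neg, add_neg_cancel_right]
    using mul_T_mem_LComp hm h (-c)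

variable (K m) {n : ℕ}

def GradedIsomorphic (γ γ' : Fin n → ℤ) : Prop :=
  ∃ φ : Matrix (Fin n) (Fin n) K[T;T⁻¹] ≃+* Matrix (Fin n) (Fin n) K[T;T⁻¹],
    ∀ d, φ '' LMatComp K m γ d = LMatComp K m γ' d

variable {K m}

namespace GradedIsomorphic

theorem of_mem_iff {γ γ' : Fin n → ℤ}
    (φ : Matrix (Fin n) (Fin n) K[T;T⁻¹] ≃+* Matrix (Fin n) (Fin n) K[T;T⁻¹])
    (h : ∀ d A, φ A ∈ LMatComp K m γ' d ↔ A ∈ LMatComp K m γ d) :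
    GradedIsomorphic K m γ γ' :=
  ⟨φ, fun d => by
    rw [← Set.image_preimage_eq (LMatComp K m γ' d) φ.surjective]
    exact congrArg _ (Set.ext fun A => (h d A).symm)⟩

theorem trans {γ γ' γ'' : Fin n → ℤ} (h : GradedIsomorphic K m γ γ')
    (h' : GradedIsomorphic K m γ' γ'') : GradedIsomorphic K m γ γ'' := by
  obtain ⟨φ, hφ⟩ := h
  obtain ⟨ψ, hψ⟩ := h'
  exact ⟨φ.trans ψ, fun d => by rw [RingEquiv.coe_trans, Set.image_comp, hφ, hψ]⟩

theorem of_eq_add_const {γ γ' : Fin n → ℤ} (c : ℤ) (h : ∀ i, γ' i = γ i + c) :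
    GradedIsomorphic K m γ γ' :=
  of_mem_iff (RingEquiv.refl _) fun d A => by
    have hdeg : ∀ i j, d + γ' j - γ' i = d + γ j - γ i := fun i j => by rw [h, h]; ring
    simp only [LMatComp, Set.mem_ofPred_eq, RingEquiv.refl_apply, hdeg]

theorem comp_perm (γ : Fin n → ℤ) (σ : Equiv.Perm (Fin n)) :
    GradedIsomorphic K m γ (γ ∘ σ) :=
  of_mem_iff (Matrix.reindexRingEquiv _ σ.symm) fun d A => by
    simp only [LMatComp, Set.mem_ofPred_eq, Matrix.coe_reindexRingEquiv, Matrix.reindex_apply,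
      Equiv.symm_symm, Matrix.submatrix_apply, Function.comp_apply]
    exact σ.forall_congr fun {_} => σ.forall_congr fun {_} => Iff.rfl

theorem sub_smul (hm : m ≠ 0) (γ a : Fin n → ℤ) :
    GradedIsomorphic K m γ (γ - (m : ℤ) • a) :=
  of_mem_iff (diagonalTConj a) fun d A => by
    simp only [LMatComp, Set.mem_ofPred_eq, diagonalTConj_apply, Pi.sub_apply, Pi.smul_apply,
      smul_eq_mul]
    refine forall_congr' fun i => forall_congr' fun j => ?_
    have hdeg : d + (γ j - m * a j) - (γ i - m * a i) = d + γ j - γ i + m * (a i - a j) := by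
      ring
    rw [hdeg, mul_T_mem_LComp_iff hm]

end GradedIsomorphic

end Grading

/-- `M₃(K[x²,x⁻²])(0,1,1)` and `M₃(K[x²,x⁻²])(0,1,2)` are graded isomorphic. -/
theorem stmt13 (K : Type*) [Field K] :
    ∃ φ : Matrix (Fin 3) (Fin 3) (LaurentPolynomial K) ≃+*
        Matrix (Fin 3) (Fin 3) (LaurentPolynomial K),
      ∀ d : ℤ, φ '' LMatComp K 2 ![0, 1, 1] d = LMatComp K 2 ![0, 1, 2] d :=
  ((GradedIsomorphic.comp_perm _ (Equiv.swap 0 1)).trans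
    ((GradedIsomorphic.sub_smul two_ne_zero _ ![1, 0, 0]).trans
      (GradedIsomorphic.of_eq_add_const 1 (by decide))))
end

section
/- Let K be a field trivially ℤ-graded. Then M_2(K)(0,2) is not graded isomorphic to M_2(K)(0,1). -/
/-- `M₂(K)(0,2)` is not graded isomorphic to `M₂(K)(0,1)`. -/
theorem stmt15 (K : Type*) [Field K] :
    ¬ ∃ φ : Matrix (Fin 2) (Fin 2) K ≃+* Matrix (Fin 2) (Fin 2) K,
        ∀ d : ℤ, φ '' matComp K ![0, 2] d = matComp K ![0, 1] d := by
  rintro ⟨φ, h⟩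
  have h1 := h 1
  have hz : matComp K ![0, 2] 1 = {0} := by
    ext x
    simp only [matComp, Set.mem_setOf_eq, Set.mem_singleton_iff]
    constructor
    · intro hx
      ext i j
      apply hx
      fin_cases i <;> fin_cases j <;> decide
    · rintro rfl i j _; rfl
  have hm : Matrix.single 1 0 (1 : K) ∈ matComp K ![0, 1] 1 := by
    intro i j hij
    fin_cases i <;> fin_cases j <;> simp_all [Matrix.single]
  rw [← h1, hz] at hm
  obtain ⟨y, hy, hxy⟩ := hm
  rw [Set.mem_singleton_iff] at hy
  subst hy
  rw [map_zero] at hxy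
  have hne : Matrix.single (1 : Fin 2) (0 : Fin 2) (1 : K) ≠ 0 := by
    intro h0
    have := congrFun (congrFun h0 1) 0
    simp [Matrix.single] at this
  exact hne hxy.symm
end
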